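/- arXiv:2502.00600 — 7 statements merged into one kernel-verified Lean document; each statement's English description precedes it below -/
import Mathlib

section
/- In an Archimedean semiprime f-algebra A, if an element a has a quasi-inverse (i.e., an element a* with a + a* = a·a*), then this quasi-inverse is unique. -/
/-!  Setting: `A` is a (possibly non-unital) commutative ring which is also a lattice,
with a translation-invariant order (i.e. a lattice-ordered additive group). -/

section Defs

variable (A : Type*) [NonUnitalCommRing A] [Lattice A]
  [CovariantClass A A (· + ·) (· ≤ ·)]

/-- The positive cone is closed under multiplication (lattice-ordered algebra/ring). -/
def MulPos : Prop := ∀ a b : A, 0 ≤ a → 0 ≤ b → 0 ≤ a * b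

/-- The `f`-algebra condition: `a ⊓ b = 0` implies `(a*c) ⊓ b = 0` and `(c*a) ⊓ b = 0`
for every `c ≥ 0`. -/
def FCond : Prop := ∀ a b c : A, a ⊓ b = 0 → 0 ≤ c → (a * c) ⊓ b = 0 ∧ (c * a) ⊓ b = 0

/-- Semiprime: no nonzero nilpotent elements (for commutative rings this is
equivalent to: squares vanish only at `0`). -/
def Semiprime : Prop := ∀ a : A, a * a = 0 → a = 0

/-- The (additive) order on `A` is Archimedean. -/
def ArchOrder : Prop := ∀ x y : A, (∀ n : ℕ, n • x ≤ y) → x ≤ 0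

/-- `b` is a quasi-inverse of `a`. -/
def IsQuasiInverse (a b : A) : Prop := a + b = a * b

/-- `a` is quasi-invertible. -/
def QuasiInvertible (a : A) : Prop := ∃ b : A, a + b = a * b

/-- `A` is bounded quasi-inversion closed. -/
def BddQuasiInvClosed : Prop :=
  ∀ a : A, |a| ≤ |a * a - a| → QuasiInvertible A a

/-- A bounded element: `a² ≤ μ|a|` for some real `μ > 0`. -/
def IsBoundedElem [Module ℝ A] (a : A) : Prop := ∃ μ : ℝ, 0 < μ ∧ a * a ≤ μ • |a|

end Defs

/-- In an Archimedean semiprime f-algebra, quasi-inverses are unique. -/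
theorem quasiInverse_unique {A : Type*} [NonUnitalCommRing A] [Lattice A]
    [CovariantClass A A (· + ·) (· ≤ ·)]
    (hmul : MulPos A) (hf : FCond A) (hsp : Semiprime A) (harch : ArchOrder A)
    (a b c : A) (hb : IsQuasiInverse A a b) (hc : IsQuasiInverse A a c) :
    b = c := by
  unfold IsQuasiInverse at hb hc
  have hd : a * (b - c) = b - c := by rw [mul_sub, ← hb, ← hc]; abel
  have h1 : a * (b - c) + b * (b - c) = b * (b - c) := by
    calc a * (b - c) + b * (b - c) = (a + b) * (b - c) := (add_mul _ _ _).symm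
      _ = a * b * (b - c) := by rw [hb]
      _ = b * (a * (b - c)) := by rw [mul_comm a b, mul_assoc]
      _ = b * (b - c) := by rw [hd]
  have h0 : a * (b - c) = 0 := add_eq_right.mp h1
  exact sub_eq_zero.mp (hd.symm.trans h0)
end

section
/- In a semiprime f-algebra A, for all a, b ∈ A: a² ≤ b² if and only if |a| ≤ |b|. -/
section Aux

variable {A : Type*} [NonUnitalCommRing A] [Lattice A]
  [CovariantClass A A (· + ·) (· ≤ ·)]

omit [CovariantClass A A (· + ·) (· ≤ ·)] in
theorem mul_eq_zero_of_inf_eq_zero (hf : FCond A) {a b : A}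
    (h : a ⊓ b = 0) (ha : 0 ≤ a) (hb : 0 ≤ b) : a * b = 0 := by
  have h1 : (a * b) ⊓ b = 0 := by
    have := (hf a b b h hb).2
    rwa [mul_comm] at this
  have h2 := (hf b (a * b) a (by rwa [inf_comm] at h1) ha).2
  simpa [inf_idem] using h2

theorem my_mul_le_mul_left (hmul : MulPos A) {a b : A} (h : a ≤ b) {c : A}
    (hc : 0 ≤ c) : c * a ≤ c * b := by
  have := hmul c (b - a) hc (by simpa [sub_nonneg] using h)
  rw [mul_sub] at this
  exact sub_nonneg.mp this

theorem my_le_of_sq_le_sq (hmul : MulPos A) (hf : FCond A) (hsp : Semiprime A)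
    {x y : A} (hx : 0 ≤ x) (hy : 0 ≤ y) (h : x * x ≤ y * y) : x ≤ y := by
  set u : A := (x - y)⁺ with hu
  set v : A := (x - y)⁻ with hv
  have huv : u ⊓ v = 0 := posPart_inf_negPart_eq_zero _
  have hu0 : 0 ≤ u := posPart_nonneg _
  have hv0 : 0 ≤ v := negPart_nonneg _
  have hsub : u - v = x - y := posPart_sub_negPart _
  have hux : u ≤ x := by
    rw [hu]
    exact sup_le (sub_le_self x hy) hx
  have hxy0 : 0 ≤ x + y := add_nonneg hx hy
  have h1 : u * u ≤ u * (x + y) := my_mul_le_mul_left hmul (hux.trans (le_add_of_nonneg_right hy)) hu0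
  have h2 : u * (x + y) ≤ v * (x + y) := by
    have : 0 ≤ (v - u) * (x + y) := by
      have heq : (v - u) * (x + y) = y * y - x * x := by
        have : v - u = y - x := by
          rw [eq_comm, ← neg_sub x y, ← hsub, neg_sub]
        rw [this, sub_mul, mul_add, mul_add, mul_comm x y]; abel
      rw [heq]; exact sub_nonneg.mpr h
    rw [sub_mul] at this; exact sub_nonneg.mp this
  have d1 : (u * u) ⊓ v = 0 := (hf u v u huv hu0).1
  have d2 : (v * (x + y)) ⊓ (u * u) = 0 := by
    have := (hf v (u * u) (x + y) (by rwa [inf_comm] at d1) hxy0).2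
    rwa [mul_comm] at this
  have huu : u * u = 0 := by
    have : u * u ≤ (v * (x + y)) ⊓ (u * u) := le_inf (h1.trans h2) le_rfl
    rw [d2] at this
    exact le_antisymm this (hmul u u hu0 hu0)
  have : u = 0 := hsp u huu
  have h4 : x - y ≤ 0 := by
    have h3 : x - y ≤ u := le_sup_left
    rwa [this] at h3
  exact sub_nonpos.mp h4

theorem sq_abs_eq (hf : FCond A) (a : A) : |a| * |a| = a * a := by
  have hpn : a⁺ * a⁻ = 0 :=
    mul_eq_zero_of_inf_eq_zero hf (posPart_inf_negPart_eq_zero a)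
      (posPart_nonneg a) (negPart_nonneg a)
  have h1 : |a| = a⁺ + a⁻ := (posPart_add_negPart a).symm
  have h2 : a = a⁺ - a⁻ := (posPart_sub_negPart a).symm
  have key : (a⁺ + a⁻) * (a⁺ + a⁻) =
      (a⁺ - a⁻) * (a⁺ - a⁻) + ((a⁺ * a⁻) + (a⁺ * a⁻) + (a⁺ * a⁻) + (a⁺ * a⁻)) := by
    rw [add_mul, mul_add, mul_add, sub_mul, mul_sub, mul_sub, mul_comm a⁻ a⁺]; abel
  rw [h1]
  conv_rhs => rw [h2]
  rw [key, hpn]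
  abel

end Aux

/-- In a semiprime f-algebra, `a² ≤ b² ↔ |a| ≤ |b|`. -/
theorem sq_le_sq_iff_abs_le_abs {A : Type*} [NonUnitalCommRing A] [Lattice A]
    [CovariantClass A A (· + ·) (· ≤ ·)]
    (hmul : MulPos A) (hf : FCond A) (hsp : Semiprime A)
    (a b : A) : a * a ≤ b * b ↔ |a| ≤ |b| := by
  have ha := sq_abs_eq hf a
  have hb := sq_abs_eq hf b
  constructor
  · intro h
    exact my_le_of_sq_le_sq hmul hf hsp (abs_nonneg a) (abs_nonneg b)
      (by rw [ha, hb]; exact h)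
  · intro h
    have h0 : 0 ≤ (|b| - |a|) * (|b| + |a|) :=
      hmul _ _ (by simpa [sub_nonneg] using h)
        (add_nonneg (abs_nonneg b) (abs_nonneg a))
    have heq : (|b| - |a|) * (|b| + |a|) = |b| * |b| - |a| * |a| := by
      rw [sub_mul, mul_add, mul_add, mul_comm |a| |b|]; abel
    rw [heq, ha, hb] at h0
    exact sub_nonneg.mp h0
end

section
/- Let A be an Archimedean semiprime f-algebra that is bounded quasi-inversion closed. If a ∈ A with a ≤ 0, then a is quasi-invertible and its quasi-inverse a* satisfies 0 ≤ a*. -/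
/-- In a bounded quasi-inversion closed Archimedean semiprime f-algebra, every `a ≤ 0`
is quasi-invertible with nonnegative quasi-inverse. -/
theorem nonpos_quasiInvertible_of_bddQuasiInvClosed {A : Type*} [NonUnitalCommRing A] [Lattice A]
    [CovariantClass A A (· + ·) (· ≤ ·)]
    (hmul : MulPos A) (hf : FCond A) (hsp : Semiprime A) (harch : ArchOrder A)
    (hq : BddQuasiInvClosed A) (a : A) (ha : a ≤ 0) :
    ∃ b : A, IsQuasiInverse A a b ∧ 0 ≤ b := by
  -- disjoint nonnegative elements have zero product
  have hdis : ∀ x y : A, x ⊓ y = 0 → 0 ≤ x → 0 ≤ y → x * y = 0 := by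
    intro x y hxy hx hy
    have h1 : (x * y) ⊓ y = 0 := (hf x y y hxy hy).1
    have h2 : y ⊓ (x * y) = 0 := by rw [inf_comm]; exact h1
    have h3 : (x * y) ⊓ (x * y) = 0 := by
      have := (hf y (x * y) x h2 hx).2
      simpa [mul_comm] using this
    simpa [inf_idem] using h3
  have ha' : 0 ≤ -a := neg_nonneg.mpr ha
  have hsq : 0 ≤ a * a := by
    have := hmul (-a) (-a) ha' ha'
    simpa [neg_mul_neg] using this
  have hnn : 0 ≤ a * a - a := by
    have h := sub_le_sub_right hsq a
    rw [zero_sub] at h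
    exact le_trans ha' h
  have habs : |a| ≤ |a * a - a| := by
    rw [abs_of_nonpos ha, abs_of_nonneg hnn]
    have h := sub_le_sub_right hsq a
    rwa [zero_sub] at h
  obtain ⟨b, hb⟩ := hq a habs
  have hpn : b⁺ * b⁻ = 0 :=
    hdis _ _ (posPart_inf_negPart_eq_zero b) (posPart_nonneg b) (negPart_nonneg b)
  have hbrep : b = b⁺ - b⁻ := (posPart_sub_negPart b).symm
  have hbneg : b * b⁻ = -(b⁻ * b⁻) := by
    calc b * b⁻ = (b⁺ - b⁻) * b⁻ := by rw [← hbrep]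
    _ = -(b⁻ * b⁻) := by rw [sub_mul, hpn, zero_sub]
  have key : a * b⁻ + b * b⁻ = a * b * b⁻ := by
    have := congrArg (fun x => x * b⁻) hb
    simpa [add_mul] using this
  rw [hbneg, mul_assoc, hbneg, mul_neg] at key
  -- key : a * b⁻ + -(b⁻ * b⁻) = -(a * (b⁻ * b⁻))
  have h4 : b⁻ * b⁻ = a * b⁻ + a * (b⁻ * b⁻) := by
    have h := congrArg (fun x => x + (b⁻ * b⁻ + a * (b⁻ * b⁻))) key
    beta_reduce at h
    abel_nf at h
    rw [h]
  have hnb : 0 ≤ b⁻ * b⁻ := hmul _ _ (negPart_nonneg b) (negPart_nonneg b)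
  have h5 : a * b⁻ ≤ 0 := by
    have := hmul (-a) (b⁻) ha' (negPart_nonneg b)
    rw [neg_mul] at this
    exact neg_nonneg.mp this
  have h6 : a * (b⁻ * b⁻) ≤ 0 := by
    have := hmul (-a) (b⁻ * b⁻) ha' hnb
    rw [neg_mul] at this
    exact neg_nonneg.mp this
  have hzero : b⁻ * b⁻ = 0 := le_antisymm (h4 ▸ add_nonpos h5 h6) hnb
  have hb0 : b⁻ = 0 := hsp _ hzero
  refine ⟨b, hb, ?_⟩
  rw [hbrep, hb0, sub_zero]
  exact posPart_nonneg b
end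

section
/- Let A be an Archimedean f-algebra with multiplicative unit e. Then A is bounded quasi-inversion closed if and only if A is bounded inversion closed (i.e., every a ≥ e is invertible in A). -/
section Helpers

variable {A : Type*} [CommRing A] [Lattice A] [CovariantClass A A (· + ·) (· ≤ ·)]

/-- Multiplication by a nonnegative element is monotone. -/
lemma aux_mul_mono (hmul : MulPos A) {x y : A} (h : x ≤ y) {c : A} (hc : 0 ≤ c) :
    c * x ≤ c * y := by
  have h0 := hmul c (y - x) hc (by rwa [sub_nonneg])
  rw [mul_sub] at h0
  exact sub_nonneg.mp h0

/-- Disjoint nonnegative elements multiply to zero. -/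
lemma aux_disj_mul_eq_zero (hf : FCond A) {x y : A} (hx : 0 ≤ x) (hy : 0 ≤ y)
    (h : x ⊓ y = 0) : x * y = 0 := by
  have h1 : (x * y) ⊓ y = 0 := (hf x y y h hy).1
  have h2 := (hf y (x * y) x (by rw [inf_comm]; exact h1) hx).2
  simpa using h2

/-- The positive and negative part of an element multiply to zero. -/
lemma aux_pn_zero (hf : FCond A) (a : A) : a⁺ * a⁻ = 0 :=
  aux_disj_mul_eq_zero hf (posPart_nonneg a) (negPart_nonneg a)
    (posPart_inf_negPart_eq_zero a)

/-- Squares are nonnegative. -/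
lemma aux_sq_nonneg (hmul : MulPos A) (hf : FCond A) (a : A) : 0 ≤ a * a := by
  have hp := hmul _ _ (posPart_nonneg a) (posPart_nonneg a)
  have hn := hmul _ _ (negPart_nonneg a) (negPart_nonneg a)
  have key : a * a = a⁺ * a⁺ + a⁻ * a⁻ := by
    linear_combination (-(a + a⁺ - a⁻)) * posPart_sub_negPart a - 2 * aux_pn_zero hf a
  rw [key]
  exact add_nonneg hp hn

lemma aux_one_nonneg (hmul : MulPos A) (hf : FCond A) : (0 : A) ≤ 1 := by
  simpa using aux_sq_nonneg hmul hf 1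

/-- The square of an element equals the square of its absolute value. -/
lemma aux_abs_sq (hf : FCond A) (a : A) : a * a = |a| * |a| := by
  linear_combination (-(a + a⁺ - a⁻)) * posPart_sub_negPart a +
    (|a| + a⁺ + a⁻) * posPart_add_negPart a - 4 * aux_pn_zero hf a

/-- Submultiplicativity of the absolute value. -/
lemma aux_abs_mul_le (hmul : MulPos A) (hf : FCond A) (x y : A) :
    |x * y| ≤ |x| * |y| := by
  have hpm := hmul _ _ (posPart_nonneg x) (negPart_nonneg y)
  have hnq := hmul _ _ (negPart_nonneg x) (posPart_nonneg y)
  have hpq := hmul _ _ (posPart_nonneg x) (posPart_nonneg y)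
  have hnm := hmul _ _ (negPart_nonneg x) (negPart_nonneg y)
  have e1 : |x| * |y| - x * y = 2 * (x⁺ * y⁻ + x⁻ * y⁺) := by
    linear_combination (-|y|) * posPart_add_negPart x + (-(x⁺ + x⁻)) * posPart_add_negPart y +
      y * posPart_sub_negPart x + (x⁺ - x⁻) * posPart_sub_negPart y
  have e2 : |x| * |y| - (-(x * y)) = 2 * (x⁺ * y⁺ + x⁻ * y⁻) := by
    linear_combination (-|y|) * posPart_add_negPart x + (-(x⁺ + x⁻)) * posPart_add_negPart y +
      (-y) * posPart_sub_negPart x + (-(x⁺ - x⁻)) * posPart_sub_negPart y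
  have two_nn : ∀ z : A, 0 ≤ z → 0 ≤ 2 * z := fun z hz => by
    rw [two_mul]; exact add_nonneg hz hz
  refine abs_le'.mpr ⟨?_, ?_⟩
  · exact sub_nonneg.mp (e1 ▸ two_nn _ (add_nonneg hpm hnq))
  · exact sub_nonneg.mp (e2 ▸ two_nn _ (add_nonneg hpq hnm))

lemma aux_natCast_nonneg (hmul : MulPos A) (hf : FCond A) (n : ℕ) : (0 : A) ≤ (n : A) := by
  induction n with
  | zero => simp
  | succ n ih =>
    push_cast
    exact add_nonneg ih (aux_one_nonneg hmul hf)

/-- A nonnegative element with zero square is zero (semiprimeness for positives). -/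
lemma aux_pos_sq_eq_zero (hmul : MulPos A) (hf : FCond A) (harch : ArchOrder A)
    {d : A} (hd : 0 ≤ d) (h : d * d = 0) : d = 0 := by
  have h1 : (0 : A) ≤ 1 := aux_one_nonneg hmul hf
  have he0 : 0 ≤ d ⊓ 1 := le_inf hd h1
  have hed : d ⊓ 1 ≤ d := inf_le_left
  have hee : (d ⊓ 1) * (d ⊓ 1) = 0 := by
    refine le_antisymm ?_ (hmul _ _ he0 he0)
    calc (d ⊓ 1) * (d ⊓ 1) ≤ (d ⊓ 1) * d := aux_mul_mono hmul hed he0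
      _ = d * (d ⊓ 1) := by ring
      _ ≤ d * d := aux_mul_mono hmul hed hd
      _ = 0 := h
  have key : ∀ n : ℕ, n • (d ⊓ 1) ≤ 1 := by
    intro n
    have hx : ((n : A) * (d ⊓ 1)) * ((n : A) * (d ⊓ 1)) = 0 := by
      have e : ((n : A) * (d ⊓ 1)) * ((n : A) * (d ⊓ 1))
          = ((n : A) * (n : A)) * ((d ⊓ 1) * (d ⊓ 1)) := by ring
      rw [e, hee, mul_zero]
    have hsq := aux_sq_nonneg hmul hf ((n : A) * (d ⊓ 1) - 1)
    have h2 : 2 * ((n : A) * (d ⊓ 1)) ≤ 1 := by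
      have e : ((n : A) * (d ⊓ 1) - 1) * ((n : A) * (d ⊓ 1) - 1)
          = 1 - 2 * ((n : A) * (d ⊓ 1)) := by linear_combination hx
      rw [e] at hsq
      exact sub_nonneg.mp hsq
    have hne : 0 ≤ (n : A) * (d ⊓ 1) := hmul _ _ (aux_natCast_nonneg hmul hf n) he0
    calc n • (d ⊓ 1) = (n : A) * (d ⊓ 1) := nsmul_eq_mul n _
      _ ≤ (n : A) * (d ⊓ 1) + (n : A) * (d ⊓ 1) := le_add_of_nonneg_left hne
      _ = 2 * ((n : A) * (d ⊓ 1)) := by ring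
      _ ≤ 1 := h2
  have he1 : d ⊓ 1 = 0 := le_antisymm (harch _ 1 key) he0
  have h5 := (hf 1 d d (by rw [inf_comm]; exact he1) hd).2
  simpa using h5

end Helpers

/-- In an Archimedean unital f-algebra, bounded quasi-inversion closedness coincides with
bounded inversion closedness. -/
theorem bddQuasiInvClosed_iff_bddInvClosed {A : Type*} [CommRing A] [Lattice A]
    [CovariantClass A A (· + ·) (· ≤ ·)]
    (hmul : MulPos A) (hf : FCond A) (harch : ArchOrder A) :
    BddQuasiInvClosed A ↔ (∀ a : A, 1 ≤ a → IsUnit a) := by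
  constructor
  · intro hq a ha
    have hc : |1 - a| ≤ |(1 - a) * (1 - a) - (1 - a)| := by
      have h1 : |1 - a| = a - 1 := by
        rw [abs_of_nonpos (sub_nonpos.mpr ha)]; ring
      have h2 : (1 - a) * (1 - a) - (1 - a) = (a - 1) * (a - 1) + (a - 1) := by ring
      have h3 : 0 ≤ (a - 1) * (a - 1) + (a - 1) :=
        add_nonneg (aux_sq_nonneg hmul hf _) (sub_nonneg.mpr ha)
      rw [h1, h2, abs_of_nonneg h3]
      exact le_add_of_nonneg_left (aux_sq_nonneg hmul hf _)
    obtain ⟨b, hb⟩ := hq (1 - a) hc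
    exact IsUnit.of_mul_eq_one (a := a) (1 - b) (by linear_combination -hb)
  · intro hinv a ha
    have h1A : (0 : A) ≤ 1 := aux_one_nonneg hmul hf
    have habs1 : |(1 : A)| = 1 := abs_of_nonneg h1A
    have step1 : |a| ≤ |a| * |1 - a| := by
      have e1 : a * a - a = a * (a - 1) := by ring
      have h := aux_abs_mul_le hmul hf a (a - 1)
      rw [abs_sub_comm a 1] at h
      calc |a| ≤ |a * a - a| := ha
        _ = |a * (a - 1)| := by rw [e1]
        _ ≤ |a| * |1 - a| := h
    set t : A := 1 - |1 - a| with htdef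
    have hts : |a| * t ≤ 0 := by
      have e : |a| * t = |a| - |a| * |1 - a| := by rw [htdef]; ring
      rw [e]
      exact sub_nonpos.mpr step1
    have hu0 : (0 : A) ≤ t⁺ := posPart_nonneg t
    have huu : (0 : A) ≤ t⁺ * t⁺ := hmul _ _ hu0 hu0
    have hut : t⁺ * t = t⁺ * t⁺ := by
      have h1 : t⁺ * t⁻ = 0 :=
        aux_disj_mul_eq_zero hf hu0 (negPart_nonneg t) (posPart_inf_negPart_eq_zero t)
      linear_combination (-t⁺) * posPart_sub_negPart t - h1
    have k1 : |a| * (t⁺ * t⁺) = 0 := by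
      refine le_antisymm ?_ (hmul _ _ (abs_nonneg a) huu)
      calc |a| * (t⁺ * t⁺) = t⁺ * (|a| * t) := by rw [← hut]; ring
        _ ≤ t⁺ * 0 := aux_mul_mono hmul hts hu0
        _ = 0 := mul_zero _
    have hule : t⁺ ≤ |a| := by
      have tri : (1 : A) ≤ |1 - a| + |a| := by
        calc (1 : A) = |(1 - a) + a| := by rw [show (1 - a) + a = (1 : A) by ring, habs1]
          _ ≤ |1 - a| + |a| := abs_add_le _ _
      rw [posPart_def]
      refine sup_le ?_ (abs_nonneg a)
      rw [htdef, sub_le_iff_le_add]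
      calc (1 : A) ≤ |1 - a| + |a| := tri
        _ = |a| + |1 - a| := by ring
    have hu3 : t⁺ * t⁺ * t⁺ = 0 := by
      refine le_antisymm ?_ (hmul _ _ huu hu0)
      calc t⁺ * t⁺ * t⁺ = (t⁺ * t⁺) * t⁺ := by ring
        _ ≤ (t⁺ * t⁺) * |a| := aux_mul_mono hmul hule huu
        _ = |a| * (t⁺ * t⁺) := by ring
        _ = 0 := k1
    have hu2 : t⁺ * t⁺ = 0 :=
      aux_pos_sq_eq_zero hmul hf harch huu (by linear_combination t⁺ * hu3)
    have hu : t⁺ = 0 := aux_pos_sq_eq_zero hmul hf harch hu0 hu2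
    have htle : t ≤ 0 := posPart_eq_zero.mp hu
    have hone : (1 : A) ≤ |1 - a| := by
      rw [htdef] at htle
      exact sub_nonpos.mp htle
    have hb2 : (1 : A) ≤ (1 - a) * (1 - a) := by
      have e := aux_abs_sq hf (1 - a)
      have h1' : |1 - a| ≤ |1 - a| * |1 - a| := by
        have h := aux_mul_mono hmul hone (abs_nonneg (1 - a))
        simpa using h
      rw [e]
      exact le_trans hone h1'
    have hbu : IsUnit (1 - a) := isUnit_of_mul_isUnit_left (hinv _ hb2)
    obtain ⟨c, hcinv⟩ := hbu.exists_right_inv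
    exact ⟨1 - c, by linear_combination -hcinv⟩
end

section
/- Let A be an Archimedean f-algebra with unit e that is bounded inversion closed. If a ∈ A satisfies |a| ≤ |a² − a|, then |e − a| ≥ e, and consequently e − a is invertible in A. -/
section Helpers

variable {A : Type*} [CommRing A] [Lattice A] [CovariantClass A A (· + ·) (· ≤ ·)]

/-- Disjoint nonnegative elements multiply to zero. -/
lemma FCond.mul_eq_zero' (hf : FCond A) {x y : A} (h : x ⊓ y = 0) : x * y = 0 := by
  have hx : 0 ≤ x := h ▸ inf_le_left
  have hy : 0 ≤ y := h ▸ inf_le_right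
  have h1 : (x * y) ⊓ y = 0 := (hf x y y h hy).1
  have h3 : (x * y) ⊓ (x * y) = 0 := (hf y (x * y) x (by rwa [inf_comm]) hx).2
  simpa using h3

/-- `s⁺ * s⁻ = 0`. -/
lemma posPart_mul_negPart' (hf : FCond A) (s : A) : s⁺ * s⁻ = 0 :=
  hf.mul_eq_zero' (posPart_inf_negPart_eq_zero s)

/-- Squares are nonnegative. -/
lemma sq_nonneg'' (hmul : MulPos A) (hf : FCond A) (s : A) : 0 ≤ s * s := by
  have h := posPart_mul_negPart' hf s
  have hsub := posPart_sub_negPart s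
  have e : s * s = s⁺ * s⁺ + s⁻ * s⁻ := by
    linear_combination (-(s + s⁺ - s⁻)) * hsub - 2 * h
  rw [e]
  exact add_nonneg (hmul _ _ (posPart_nonneg s) (posPart_nonneg s))
    (hmul _ _ (negPart_nonneg s) (negPart_nonneg s))

lemma abs_sq' (hf : FCond A) (s : A) : |s| * |s| = s * s := by
  have h := posPart_mul_negPart' hf s
  have hab := posPart_add_negPart s
  have hsub := posPart_sub_negPart s
  linear_combination (-(|s| + s⁺ + s⁻)) * hab + (s + s⁺ - s⁻) * hsub + 4 * h

/-- `|x*y| ≤ |x| * |y|`. -/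
lemma abs_mul_le' (hmul : MulPos A) (x y : A) : |x * y| ≤ |x| * |y| := by
  have ex := posPart_sub_negPart x
  have ey := posPart_sub_negPart y
  have ax := posPart_add_negPart x
  have ay := posPart_add_negPart y
  have h1 : 0 ≤ x⁺ * y⁻ + x⁻ * y⁺ :=
    add_nonneg (hmul _ _ (posPart_nonneg x) (negPart_nonneg y))
      (hmul _ _ (negPart_nonneg x) (posPart_nonneg y))
  have h2 : 0 ≤ x⁺ * y⁺ + x⁻ * y⁻ :=
    add_nonneg (hmul _ _ (posPart_nonneg x) (posPart_nonneg y))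
      (hmul _ _ (negPart_nonneg x) (negPart_nonneg y))
  have key1 : x * y ≤ |x| * |y| := by
    have e : |x| * |y| - x * y = (x⁺ * y⁻ + x⁻ * y⁺) + (x⁺ * y⁻ + x⁻ * y⁺) := by
      linear_combination (-|y|) * ax - (x⁺ + x⁻) * ay + y * ex + (x⁺ - x⁻) * ey
    exact sub_nonneg.1 (e ▸ add_nonneg h1 h1)
  have key2 : -(x * y) ≤ |x| * |y| := by
    have e : |x| * |y| - -(x * y) = (x⁺ * y⁺ + x⁻ * y⁻) + (x⁺ * y⁺ + x⁻ * y⁻) := by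
      linear_combination (-|y|) * ax - (x⁺ + x⁻) * ay - y * ex - (x⁺ - x⁻) * ey
    exact sub_nonneg.1 (e ▸ add_nonneg h2 h2)
  exact abs_le'.2 ⟨key1, key2⟩

end Helpers

/-- In a bounded inversion closed Archimedean unital f-algebra, `|a| ≤ |a² - a|` implies
`|e - a| ≥ e`, hence `e - a` is invertible. -/
theorem abs_one_sub_ge_one_of_abs_le {A : Type*} [CommRing A] [Lattice A]
    [CovariantClass A A (· + ·) (· ≤ ·)]
    (hmul : MulPos A) (hf : FCond A) (harch : ArchOrder A)
    (hbic : ∀ a : A, 1 ≤ a → IsUnit a)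
    (a : A) (ha : |a| ≤ |a * a - a|) :
    1 ≤ |1 - a| ∧ IsUnit (1 - a) := by
  have habs0 : (0 : A) ≤ |a| := abs_nonneg a
  have hone : (0 : A) ≤ 1 := by simpa using sq_nonneg'' hmul hf 1
  -- |a| ≤ |a| * |1 - a|
  have ha' : |a| ≤ |a| * |1 - a| := by
    calc |a| ≤ |a * a - a| := ha
      _ = |a * (1 - a)| := by rw [show a * a - a = -(a * (1 - a)) by ring, abs_neg]
      _ ≤ |a| * |1 - a| := abs_mul_le' hmul a (1 - a)
  set v : A := 1 - |1 - a| with hv_def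
  have hva : v ≤ |a| := by
    have h1 : (1 : A) - a ≤ |1 - a| := le_abs_self _
    have : v ≤ a := by
      have := sub_le_sub_left h1 (1 : A)
      simpa [hv_def] using this.trans_eq (by ring)
    exact this.trans (le_abs_self a)
  set x : A := v⁺ with hx_def
  have hx0 : 0 ≤ x := posPart_nonneg v
  have hxa : x ≤ |a| := by
    rw [hx_def, posPart_def]
    exact sup_le hva habs0
  -- |a| * v⁺ = 0
  have hav : |a| * v ≤ 0 := by
    have : |a| * v = |a| - |a| * |1 - a| := by rw [hv_def]; ring
    rw [this]
    exact sub_nonpos.2 ha'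
  have hpn : v⁺ ⊓ v⁻ = 0 := posPart_inf_negPart_eq_zero v
  have h1 : (|a| * v⁺) ⊓ v⁻ = 0 := (hf v⁺ v⁻ |a| hpn habs0).2
  have h2 : (|a| * v⁻) ⊓ (|a| * v⁺) = 0 :=
    (hf v⁻ (|a| * v⁺) |a| (by rwa [inf_comm]) habs0).2
  have hle : |a| * v⁺ ≤ |a| * v⁻ := by
    have e : |a| * v = |a| * v⁺ - |a| * v⁻ := by
      rw [← mul_sub, posPart_sub_negPart]
    have := hav
    rw [e] at this
    exact sub_nonpos.1 this
  have key0 : |a| * x = 0 := by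
    have : |a| * v⁺ = (|a| * v⁺) ⊓ (|a| * v⁻) := (inf_eq_left.2 hle).symm
    rw [hx_def, this, inf_comm, h2]
  have hxsq : x * x = 0 := by
    have hub : x * x ≤ |a| * x := by
      have := hmul (|a| - x) x (sub_nonneg.2 hxa) hx0
      have e : (|a| - x) * x = |a| * x - x * x := by ring
      rw [e] at this
      exact sub_nonneg.1 this
    have hlb : 0 ≤ x * x := hmul x x hx0 hx0
    rw [key0] at hub
    exact le_antisymm hub hlb
  -- each n • x ≤ 1
  have hstep : ∀ n : ℕ, n • x ≤ 1 := by
    intro n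
    set y : A := n • x with hy_def
    have hy0 : 0 ≤ y := nsmul_nonneg hx0 n
    have hysq : y * y = 0 := by
      rw [hy_def, nsmul_eq_mul]
      calc (n : A) * x * ((n : A) * x) = (n : A) * (n : A) * (x * x) := by ring
        _ = 0 := by rw [hxsq, mul_zero]
    set z : A := y ⊓ 1 with hz_def
    have hzy : z ≤ y := inf_le_left
    have hz0 : 0 ≤ z := le_inf hy0 hone
    have hyz : y * z = 0 := by
      have hub : y * z ≤ y * y := by
        have := hmul y (y - z) hy0 (sub_nonneg.2 hzy)
        have e : y * (y - z) = y * y - y * z := by ring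
        rw [e] at this
        exact sub_nonneg.1 this
      have hlb : 0 ≤ y * z := hmul y z hy0 hz0
      rw [hysq] at hub
      exact le_antisymm hub hlb
    have hzz : z * z = 0 := by
      have hub : z * z ≤ y * z := by
        have := hmul (y - z) z (sub_nonneg.2 hzy) hz0
        have e : (y - z) * z = y * z - z * z := by ring
        rw [e] at this
        exact sub_nonneg.1 this
      have hlb : 0 ≤ z * z := hmul z z hz0 hz0
      rw [hyz] at hub
      exact le_antisymm hub hlb
    have hpq : (y - z) ⊓ (1 - z) = 0 := by
      rw [← inf_sub, ← hz_def, sub_self]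
    have hmul0 : (y - z) * (1 - z) = 0 := hf.mul_eq_zero' hpq
    have hyeq : y = z := by
      have h0 : y - z = 0 := by linear_combination hmul0 + hyz - hzz
      exact sub_eq_zero.1 h0
    calc n • x = y := hy_def.symm
      _ = z := hyeq
      _ ≤ 1 := inf_le_right
  have hxzero : x = 0 := le_antisymm (harch x 1 hstep) hx0
  have hvle : v ≤ 0 := posPart_eq_zero.1 hxzero
  have hge : 1 ≤ |1 - a| := by
    have := hvle
    rw [hv_def] at this
    exact sub_nonpos.1 this
  refine ⟨hge, ?_⟩
  have hu : IsUnit |1 - a| := hbic _ hge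
  have hu2 : IsUnit ((1 - a) * (1 - a)) := by
    rw [← abs_sq' hf (1 - a)]
    exact hu.mul hu
  exact isUnit_of_mul_isUnit_left hu2
end

section
/- Let A be an Archimedean semiprime f-algebra and a, b ∈ A. If a·x ≤ b·x for all x ∈ A with x ≥ 0, then a ≤ b. -/
/-- If `a·x ≤ b·x` for all `x ≥ 0`, then `a ≤ b`. -/
theorem le_of_mul_le_mul_pos {A : Type*} [NonUnitalCommRing A] [Lattice A]
    [CovariantClass A A (· + ·) (· ≤ ·)]
    (hmul : MulPos A) (hf : FCond A) (hsp : Semiprime A) (harch : ArchOrder A)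
    (a b : A) (h : ∀ x : A, 0 ≤ x → a * x ≤ b * x) : a ≤ b := by
  set d := a - b with hd
  have hp : (0:A) ≤ d⁺ := posPart_nonneg d
  have hn : (0:A) ≤ d⁻ := negPart_nonneg d
  have hinf : d⁺ ⊓ d⁻ = 0 := posPart_inf_negPart_eq_zero d
  -- d⁺ * d⁻ = 0
  have h1 : (d⁺ * d⁻) ⊓ d⁻ = 0 := (hf _ _ _ hinf hn).1
  have h2 : (d⁻ * d⁺) ⊓ d⁺ = 0 := (hf _ _ _ (inf_comm d⁺ d⁻ ▸ hinf) hp).1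
  have h2' : d⁺ ⊓ (d⁺ * d⁻) = 0 := by
    rw [inf_comm]; rw [mul_comm] at h2; exact h2
  have h3 : (d⁺ * d⁻) ⊓ (d⁺ * d⁻) = 0 := (hf _ _ _ h2' hn).1
  have hpn : d⁺ * d⁻ = 0 := by simpa using h3
  -- d * d⁺ ≤ 0
  have hdp : d * d⁺ ≤ 0 := by
    have := h d⁺ hp
    have : a * d⁺ - b * d⁺ ≤ 0 := sub_nonpos.mpr this
    calc d * d⁺ = a * d⁺ - b * d⁺ := by rw [hd, sub_mul]
    _ ≤ 0 := this
  have hsq : d⁺ * d⁺ ≤ 0 := by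
    have hdd : d = d⁺ - d⁻ := (posPart_sub_negPart d).symm
    have : d⁺ * d⁺ - d⁻ * d⁺ ≤ 0 := by rw [← sub_mul, ← hdd]; exact hdp
    have hz : d⁻ * d⁺ = 0 := by rw [mul_comm]; exact hpn
    rw [hz, sub_zero] at this; exact this
  have hsq0 : d⁺ * d⁺ = 0 := le_antisymm hsq (hmul _ _ hp hp)
  have : d⁺ = 0 := hsp _ hsq0
  have : d ≤ 0 := by
    have := posPart_eq_zero.mp this
    exact this
  exact sub_nonpos.mp this
end

section
/- Let A be a relatively uniformly complete Archimedean semiprime f-algebra. Then any subalgebra of A containing all bounded elements of A is an order ideal of A. -/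
set_option linter.unusedVariables false
set_option linter.unusedSectionVars false


/-- Relative uniform completeness (with regulators). -/
def RUComplete (A : Type*) [NonUnitalCommRing A] [Lattice A] [Module ℝ A] : Prop :=
  ∀ (x : ℕ → A) (u : A), 0 ≤ u →
    (∀ ε : ℝ, 0 < ε → ∃ N : ℕ, ∀ m ≥ N, ∀ n ≥ N, |x m - x n| ≤ ε • u) →
    ∃ l : A, ∀ ε : ℝ, 0 < ε → ∃ N : ℕ, ∀ n ≥ N, |x n - l| ≤ ε • u

namespace OIAux

variable {A : Type*} [NonUnitalCommRing A] [Lattice A]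
  [CovariantClass A A (· + ·) (· ≤ ·)]

lemma mul_le_mul_left' (hmul : MulPos A) {x y : A} (z : A) (hz : 0 ≤ z) (h : x ≤ y) :
    z * x ≤ z * y := by
  have h0 : 0 ≤ z * (y - x) := hmul z (y - x) hz (sub_nonneg.2 h)
  rw [mul_sub] at h0
  exact sub_nonneg.1 h0

lemma mul_le_mul_right' (hmul : MulPos A) {x y : A} (z : A) (hz : 0 ≤ z) (h : x ≤ y) :
    x * z ≤ y * z := by
  rw [mul_comm x z, mul_comm y z]; exact mul_le_mul_left' hmul z hz h

lemma abs_sub_le' (a b : A) : |a - b| ≤ |a| + |b| := by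
  rw [sub_eq_add_neg]
  have h := abs_add_le a (-b)
  rwa [abs_neg] at h

lemma disj_mul_eq_zero (hmul : MulPos A) (hf : FCond A) {u v : A} (h : u ⊓ v = 0) :
    u * v = 0 := by
  have hu : 0 ≤ u := by rw [← h]; exact inf_le_left
  have hv : 0 ≤ v := by rw [← h]; exact inf_le_right
  have s1 : (u * v) ⊓ v = 0 := (hf u v v h hv).1
  have s2 : (v * u) ⊓ (u * v) = 0 := (hf v (u * v) u (by rw [inf_comm]; exact s1) hu).1
  rw [mul_comm v u, inf_idem] at s2
  exact s2

lemma pp_np (hmul : MulPos A) (hf : FCond A) (z : A) : z⁺ * z⁻ = 0 :=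
  disj_mul_eq_zero hmul hf (posPart_inf_negPart_eq_zero z)

lemma sq_decomp (hmul : MulPos A) (hf : FCond A) (z : A) :
    z * z = z⁺ * z⁺ + z⁻ * z⁻ := by
  have hpp : z⁺ * z⁻ = 0 := pp_np hmul hf z
  have hpp' : z⁻ * z⁺ = 0 := by rw [mul_comm]; exact hpp
  conv_lhs => rw [← posPart_sub_negPart z]
  rw [sub_mul, mul_sub, mul_sub, hpp, hpp']
  abel

lemma sq_nonneg' (hmul : MulPos A) (hf : FCond A) (z : A) : 0 ≤ z * z := by
  rw [sq_decomp hmul hf z]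
  exact add_nonneg (hmul _ _ (posPart_nonneg z) (posPart_nonneg z))
    (hmul _ _ (negPart_nonneg z) (negPart_nonneg z))

lemma sq_abs' (hmul : MulPos A) (hf : FCond A) (z : A) : |z| * |z| = z * z := by
  have hpp : z⁺ * z⁻ = 0 := pp_np hmul hf z
  have hpp' : z⁻ * z⁺ = 0 := by rw [mul_comm]; exact hpp
  have h1 : |z| * |z| = z⁺ * z⁺ + z⁻ * z⁻ := by
    rw [← posPart_add_negPart z, add_mul, mul_add, mul_add, hpp, hpp']
    abel
  rw [h1, sq_decomp hmul hf z]

lemma sum_disj {a b c : A} (ha : 0 ≤ a) (hb : 0 ≤ b) (h1 : a ⊓ c = 0) (h2 : b ⊓ c = 0) :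
    (a + b) ⊓ c = 0 := by
  have hc : 0 ≤ c := by rw [← h1]; exact inf_le_right
  apply le_antisymm
  · have e1 : (a + b) ⊓ c ≤ b := by
      have h3 : (a + b) ⊓ c ≤ (a + b) ⊓ (c + b) :=
        inf_le_inf_left _ (le_add_of_nonneg_right hb)
      rwa [← inf_add a c b, h1, zero_add] at h3
    have e2 : (a + b) ⊓ c ≤ b ⊓ c := le_inf e1 inf_le_right
    rwa [h2] at e2
  · exact le_inf (add_nonneg ha hb) hc

lemma posPart_of_disj {p q : A} (hp : 0 ≤ p) (hq : 0 ≤ q) (h : p ⊓ q = 0) :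
    (p - q)⁺ = p := by
  have e1 : (p - q)⁺ + q = p ⊔ q := by
    rw [posPart_def, sup_add, sub_add_cancel, zero_add]
  have e2 : p ⊔ q = p + q := by
    have := inf_add_sup p q
    rw [h, zero_add] at this
    exact this
  rw [e2] at e1
  exact add_right_cancel e1

lemma negPart_of_disj {p q : A} (hp : 0 ≤ p) (hq : 0 ≤ q) (h : p ⊓ q = 0) :
    (p - q)⁻ = q := by
  have : (p - q)⁻ = (q - p)⁺ := by rw [← posPart_neg, neg_sub]
  rw [this]
  exact posPart_of_disj hq hp (by rw [inf_comm]; exact h)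

lemma abs_of_disj {p q : A} (hp : 0 ≤ p) (hq : 0 ≤ q) (h : p ⊓ q = 0) :
    |p - q| = p + q := by
  rw [← posPart_add_negPart (p - q), posPart_of_disj hp hq h, negPart_of_disj hp hq h]

lemma posPart_mul (hmul : MulPos A) (hf : FCond A) {c : A} (hc : 0 ≤ c) (x : A) :
    (x * c)⁺ = x⁺ * c := by
  have h0 := posPart_inf_negPart_eq_zero x
  have d1 : (x⁺ * c) ⊓ x⁻ = 0 := (hf _ _ _ h0 hc).1
  have d2 : (x⁻ * c) ⊓ (x⁺ * c) = 0 := (hf _ _ _ (by rw [inf_comm]; exact d1) hc).1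
  have hxc : x * c = x⁺ * c - x⁻ * c := by rw [← sub_mul, posPart_sub_negPart]
  rw [hxc]
  exact posPart_of_disj (hmul _ _ (posPart_nonneg x) hc) (hmul _ _ (negPart_nonneg x) hc)
    (by rw [inf_comm]; exact d2)

lemma abs_mul_right (hmul : MulPos A) (hf : FCond A) {c : A} (hc : 0 ≤ c) (x : A) :
    |x * c| = |x| * c := by
  have h0 := posPart_inf_negPart_eq_zero x
  have d1 : (x⁺ * c) ⊓ x⁻ = 0 := (hf _ _ _ h0 hc).1
  have d2 : (x⁻ * c) ⊓ (x⁺ * c) = 0 := (hf _ _ _ (by rw [inf_comm]; exact d1) hc).1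
  have hxc : x * c = x⁺ * c - x⁻ * c := by rw [← sub_mul, posPart_sub_negPart]
  rw [hxc, abs_of_disj (hmul _ _ (posPart_nonneg x) hc) (hmul _ _ (negPart_nonneg x) hc)
    (by rw [inf_comm]; exact d2), ← add_mul, posPart_add_negPart]

lemma absAddMul (hmul : MulPos A) (hf : FCond A) {G : A} (hG : 0 ≤ G) (v : A) :
    |v + v * G| = |v| + |v| * G := by
  have h0 : v⁺ ⊓ v⁻ = 0 := posPart_inf_negPart_eq_zero v
  have h0' : v⁻ ⊓ v⁺ = 0 := by rw [inf_comm]; exact h0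
  have d1 : (v⁺ * G) ⊓ v⁻ = 0 := (hf _ _ _ h0 hG).1
  have d2 : (v⁻ * G) ⊓ v⁺ = 0 := (hf _ _ _ h0' hG).1
  have d3 : (v⁻ * G) ⊓ (v⁺ * G) = 0 := (hf _ _ _ (by rw [inf_comm]; exact d1) hG).1
  have hpmul : 0 ≤ v⁺ * G := hmul _ _ (posPart_nonneg v) hG
  have hnmul : 0 ≤ v⁻ * G := hmul _ _ (negPart_nonneg v) hG
  have e1 : (v⁺ + v⁺ * G) ⊓ v⁻ = 0 := sum_disj (posPart_nonneg v) hpmul h0 d1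
  have e2 : (v⁺ + v⁺ * G) ⊓ (v⁻ * G) = 0 :=
    sum_disj (posPart_nonneg v) hpmul (by rw [inf_comm]; exact d2) (by rw [inf_comm]; exact d3)
  have e3 : (v⁻ + v⁻ * G) ⊓ (v⁺ + v⁺ * G) = 0 :=
    sum_disj (negPart_nonneg v) hnmul (by rw [inf_comm]; exact e1) (by rw [inf_comm]; exact e2)
  have hvp : v + v * G = (v⁺ + v⁺ * G) - (v⁻ + v⁻ * G) := by
    conv_lhs => rw [← posPart_sub_negPart v]
    rw [sub_mul]
    abel
  rw [hvp, abs_of_disj (add_nonneg (posPart_nonneg v) hpmul)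
    (add_nonneg (negPart_nonneg v) hnmul) (by rw [inf_comm]; exact e3)]
  rw [← posPart_add_negPart v, add_mul]
  abel

lemma abs_mul_le' (hmul : MulPos A) (x y : A) : |x * y| ≤ |x| * |y| := by
  have exy : x * y = (x⁺ - x⁻) * (y⁺ - y⁻) := by rw [posPart_sub_negPart, posPart_sub_negPart]
  have h1 : (x⁺ + x⁻) * (y⁺ + y⁻) - (x⁺ - x⁻) * (y⁺ - y⁻)
      = (x⁺ * y⁻ + x⁻ * y⁺) + (x⁺ * y⁻ + x⁻ * y⁺) := by
    simp only [mul_add, add_mul, mul_sub, sub_mul]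
    abel
  have h2 : (x⁺ + x⁻) * (y⁺ + y⁻) + (x⁺ - x⁻) * (y⁺ - y⁻)
      = (x⁺ * y⁺ + x⁻ * y⁻) + (x⁺ * y⁺ + x⁻ * y⁻) := by
    simp only [mul_add, add_mul, mul_sub, sub_mul]
    abel
  have hp : 0 ≤ x⁺ * y⁻ + x⁻ * y⁺ :=
    add_nonneg (hmul _ _ (posPart_nonneg x) (negPart_nonneg y))
      (hmul _ _ (negPart_nonneg x) (posPart_nonneg y))
  have hq : 0 ≤ x⁺ * y⁺ + x⁻ * y⁻ :=
    add_nonneg (hmul _ _ (posPart_nonneg x) (posPart_nonneg y))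
      (hmul _ _ (negPart_nonneg x) (negPart_nonneg y))
  rw [exy, ← posPart_add_negPart x, ← posPart_add_negPart y]
  apply abs_le'.2
  constructor
  · have : 0 ≤ (x⁺ + x⁻) * (y⁺ + y⁻) - (x⁺ - x⁻) * (y⁺ - y⁻) := by
      rw [h1]; exact add_nonneg hp hp
    exact sub_nonneg.1 this
  · have h3 : 0 ≤ (x⁺ + x⁻) * (y⁺ + y⁻) + (x⁺ - x⁻) * (y⁺ - y⁻) := by
      rw [h2]; exact add_nonneg hq hq
    exact neg_le_iff_add_nonneg.2 h3

lemma le_zero_of_selfneg (hmul : MulPos A) (hf : FCond A) {d h : A}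
    (hh : 0 ≤ h) (hd : d ≤ -(d * h)) : d ≤ 0 := by
  have h1 : d⁺ ≤ d⁻ * h := by
    have h2 : d⁺ ≤ (-(d * h))⁺ := posPart_mono hd
    rw [← neg_mul, posPart_mul hmul hf hh (-d), posPart_neg] at h2
    exact h2
  have h3 : d⁺ ⊓ (d⁻ * h) = 0 := by
    have h4 := (hf d⁻ d⁺ h (by rw [inf_comm]; exact posPart_inf_negPart_eq_zero d) hh).1
    rw [inf_comm] at h4
    exact h4
  have h5 : d⁺ = 0 := le_antisymm (by rw [← h3]; exact le_inf le_rfl h1) (posPart_nonneg d)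
  calc d ≤ d⁺ := le_posPart d
    _ = 0 := h5

lemma mul_le_sup' (hmul : MulPos A) (hf : FCond A) {x y : A} (hx : 0 ≤ x) (hy : 0 ≤ y) :
    x * y ≤ x + x * (y * y) := by
  set d := x * y - x with hdd
  have e : -(d * y) = x * y - x * (y * y) := by
    simp only [hdd, sub_mul, neg_sub, mul_assoc]
  have key : d ⊓ (-(d * y)) ≤ 0 := by
    have h1 : d ⊓ (-(d * y)) ≤ d⁺ ⊓ (-(d * y))⁺ := inf_le_inf (le_posPart _) (le_posPart _)
    have h2 : (-(d * y))⁺ = d⁻ * y := by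
      rw [← neg_mul, posPart_mul hmul hf hy (-d), posPart_neg]
    have h3 : d⁺ ⊓ (d⁻ * y) = 0 := by
      have h4 := (hf d⁻ d⁺ y (by rw [inf_comm]; exact posPart_inf_negPart_eq_zero d) hy).1
      rw [inf_comm] at h4
      exact h4
    rw [h2] at h1
    exact h1.trans (le_of_eq h3)
  rw [e] at key
  have key2 : x * y - x ⊔ (x * (y * y)) ≤ 0 := by
    rw [sub_sup]
    exact key
  have h6 : x * y ≤ x ⊔ (x * (y * y)) := sub_nonpos.1 key2
  refine h6.trans (sup_le ?_ ?_)
  · exact le_add_of_nonneg_right (hmul _ _ hx (hmul _ _ hy hy))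
  · exact le_add_of_nonneg_left hx

lemma sq_le_self_A (hmul : MulPos A) (hf : FCond A) {w G : A} (hw : 0 ≤ w) (hG : 0 ≤ G)
    (h : w + w * G ≤ G) : w * w ≤ w := by
  have h2 : w * w + w * (w * G) ≤ w * G := by
    have h3 := mul_le_mul_left' hmul w hw h
    rwa [mul_add] at h3
  have h2' : w * w + w * w * G ≤ w * G := by rwa [← mul_assoc] at h2
  have hd : w * w - w ≤ -((w * w - w) * G) := by
    have e : -((w * w - w) * G) = w * G - w * w * G := by
      simp only [sub_mul, neg_sub]
    rw [e]
    have h5 : (w * w + w * w * G) - w * w * G ≤ w * G - w * w * G := sub_le_sub_right h2' _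
    have h6 : (w * w + w * w * G) - w * w * G = w * w := by abel
    rw [h6] at h5
    calc w * w - w ≤ w * w := sub_le_self _ hw
      _ ≤ w * G - w * w * G := h5
  have := le_zero_of_selfneg hmul hf hG hd
  exact sub_nonpos.1 this

lemma sq_le_self_B (hmul : MulPos A) (hf : FCond A) {w y : A} (hw : 0 ≤ w) (hy : 0 ≤ y)
    (h : w + w * (y * y) ≤ y) : w * w ≤ w := by
  have h2 : w * w + w * (w * (y * y)) ≤ w * y := by
    have h3 := mul_le_mul_left' hmul w hw h
    rwa [mul_add] at h3
  have h3 : w * y ≤ w + w * (y * y) := mul_le_sup' hmul hf hw hy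
  have h4 : w * w + w * w * (y * y) ≤ w + w * (y * y) := by
    rw [mul_assoc]
    exact h2.trans h3
  have hd : w * w - w ≤ -((w * w - w) * (y * y)) := by
    have e : -((w * w - w) * (y * y)) = w * (y * y) - w * w * (y * y) := by
      simp only [sub_mul, neg_sub]
    rw [e, sub_le_sub_iff]
    calc w * w + w * w * (y * y) ≤ w + w * (y * y) := h4
      _ = w * (y * y) + w := by abel
  have := le_zero_of_selfneg hmul hf (sq_nonneg' hmul hf y) hd
  exact sub_nonpos.1 this

section SMul
variable [Module ℝ A]

lemma smul_le_smul_elem (hsmul : ∀ (r : ℝ) (x : A), 0 ≤ r → 0 ≤ x → 0 ≤ r • x)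
    {x y : A} {r : ℝ} (hr : 0 ≤ r) (h : x ≤ y) : r • x ≤ r • y := by
  have h0 := hsmul r (y - x) hr (sub_nonneg.2 h)
  rw [smul_sub] at h0
  exact sub_nonneg.1 h0

lemma smul_le_smul_scalar (hsmul : ∀ (r : ℝ) (x : A), 0 ≤ r → 0 ≤ x → 0 ≤ r • x)
    {x : A} {r s : ℝ} (hr : r ≤ s) (hx : 0 ≤ x) : r • x ≤ s • x := by
  have h0 := hsmul (s - r) x (sub_nonneg.2 hr) hx
  rw [sub_smul] at h0
  exact sub_nonneg.1 h0

lemma smul_mul_nat (m : ℕ) (x y : A) : ((m : ℝ) • x) * y = (m : ℝ) • (x * y) := by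
  rw [Nat.cast_smul_eq_nsmul ℝ m x, Nat.cast_smul_eq_nsmul ℝ m (x*y), smul_mul_assoc]

lemma mul_smul_nat (m : ℕ) (x y : A) : x * ((m : ℝ) • y) = (m : ℝ) • (x * y) := by
  rw [mul_comm, smul_mul_nat, mul_comm]

lemma smul_mul_inv (k : ℕ) (hk : k ≠ 0) (x y : A) :
    (((k : ℝ))⁻¹ • x) * y = ((k : ℝ))⁻¹ • (x * y) := by
  have hk0 : (k : ℝ) ≠ 0 := Nat.cast_ne_zero.2 hk
  have cancel : ∀ z : A, (k : ℝ)⁻¹ • ((k : ℝ) • z) = z := fun z => by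
    rw [smul_smul, inv_mul_cancel₀ hk0, one_smul]
  calc ((k : ℝ)⁻¹ • x) * y = (k : ℝ)⁻¹ • ((k : ℝ) • (((k : ℝ)⁻¹ • x) * y)) := (cancel _).symm
    _ = (k : ℝ)⁻¹ • (((k : ℝ) • ((k : ℝ)⁻¹ • x)) * y) := by rw [smul_mul_nat]
    _ = (k : ℝ)⁻¹ • (x * y) := by rw [smul_smul, mul_inv_cancel₀ hk0, one_smul]

lemma mul_smul_inv (k : ℕ) (hk : k ≠ 0) (x y : A) :
    x * (((k : ℝ))⁻¹ • y) = ((k : ℝ))⁻¹ • (x * y) := by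
  rw [mul_comm, smul_mul_inv k hk, mul_comm]

lemma sq_key (hmul : MulPos A) (hf : FCond A) (hsp : Semiprime A)
    (m : ℕ) {x y : A} (hx : 0 ≤ x) (hy : 0 ≤ y) :
    (2 * m) • (x * y) ≤ (m * m) • x + x * (y * y) := by
  set P := (m * m) • x - (2 * m) • (x * y) + x * (y * y) with hPdef
  have hxy : 0 ≤ x * y := hmul _ _ hx hy
  have hyy : 0 ≤ y * y := hmul _ _ hy hy
  have hxyy : 0 ≤ x * (y * y) := hmul _ _ hx hyy
  have hMMx : 0 ≤ (m * m) • x := nsmul_nonneg hx _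
  have h2Mxy : 0 ≤ (2 * m) • (x * y) := nsmul_nonneg hxy _
  have e5 : x * (x * y) = x * x * y := (mul_assoc x x y).symm
  have e6 : (x * y) * x = x * x * y := by rw [mul_comm (x*y) x]; exact e5
  have e7 : x * (x * (y * y)) = (x * x) * (y * y) := (mul_assoc _ _ _).symm
  have hSsq : x * P = ((m • x) - x * y) * ((m • x) - x * y) := by
    have lhs : x * P = (m * m) • (x * x) - (2 * m) • (x * x * y) + (x * x) * (y * y) := by
      rw [hPdef, mul_add, mul_sub, mul_smul_comm, mul_smul_comm, e5, e7]
    have rhs : ((m • x) - x * y) * ((m • x) - x * y)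
        = (m * m) • (x * x) - (2 * m) • (x * x * y) + (x * x) * (y * y) := by
      simp only [sub_mul, mul_sub, smul_sub, smul_mul_assoc, mul_smul_comm, smul_smul]
      rw [e5, e6, mul_mul_mul_comm, two_mul, add_smul]
      abel
    rw [lhs, rhs]
  have hxP : 0 ≤ x * P := by rw [hSsq]; exact sq_nonneg' hmul hf _
  set N := P⁻ with hNdef
  have hN0 : 0 ≤ N := negPart_nonneg P
  have hNN : 0 ≤ N * N := hmul _ _ hN0 hN0
  have hPN : P * N = -(N * N) := by
    calc P * N = (P⁺ - P⁻) * N := by rw [posPart_sub_negPart]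
      _ = P⁺ * P⁻ - P⁻ * P⁻ := by rw [sub_mul]
      _ = -(N * N) := by rw [pp_np hmul hf P, zero_sub]
  have hxNN : x * (N * N) = 0 := by
    have h5 : 0 ≤ (x * P) * N := hmul _ _ hxP hN0
    have h6 : (x * P) * N = -(x * (N * N)) := by rw [mul_assoc, hPN, mul_neg]
    rw [h6] at h5
    exact le_antisymm (neg_nonneg.1 h5) (hmul _ _ hx hNN)
  have hNF : N ≤ (m * m) • x + (2 * m) • (x * y) + x * (y * y) := by
    have h7 : N ≤ |P| := by
      rw [← posPart_add_negPart P]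
      exact le_add_of_nonneg_left (posPart_nonneg P)
    refine h7.trans ?_
    have h8 : |P| ≤ |(m * m) • x - (2 * m) • (x * y)| + |x * (y * y)| := abs_add_le _ _
    have h9 : |(m * m) • x - (2 * m) • (x * y)| ≤ |(m * m) • x| + |(2 * m) • (x * y)| :=
      abs_sub_le' _ _
    calc |P| ≤ (|(m * m) • x| + |(2 * m) • (x * y)|) + |x * (y * y)| :=
          h8.trans (add_le_add_left h9 _)
      _ = (m * m) • x + (2 * m) • (x * y) + x * (y * y) := by
          rw [abs_of_nonneg hMMx, abs_of_nonneg h2Mxy, abs_of_nonneg hxyy]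
  have hNNN : N * (N * N) = 0 := by
    have h10 : (N * N) * N ≤ (N * N) * ((m * m) • x + (2 * m) • (x * y) + x * (y * y)) :=
      mul_le_mul_left' hmul (N * N) hNN hNF
    have h11 : (N * N) * ((m * m) • x + (2 * m) • (x * y) + x * (y * y)) = 0 := by
      rw [mul_add, mul_add, mul_smul_comm, mul_smul_comm]
      have c1 : (N * N) * x = 0 := by rw [mul_comm]; exact hxNN
      have c2 : (N * N) * (x * y) = 0 := by
        rw [← mul_assoc, c1, zero_mul]
      have c3 : (N * N) * (x * (y * y)) = 0 := by
        rw [← mul_assoc, c1, zero_mul]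
      rw [c1, c2, c3, smul_zero, smul_zero]
      simp
    have h12 : N * (N * N) = (N * N) * N := by rw [mul_comm]
    rw [h12]
    exact le_antisymm (h11 ▸ h10) (hmul _ _ hNN hN0)
  have hN4 : (N * N) * (N * N) = 0 := by
    rw [mul_assoc N N (N * N), hNNN, mul_zero]
  have hNN0 : N * N = 0 := hsp _ hN4
  have hN00 : N = 0 := hsp _ hNN0
  have hP0 : 0 ≤ P := by
    have hPp : P = P⁺ := by
      conv_lhs => rw [← posPart_sub_negPart P]
      rw [← hNdef, hN00, sub_zero]
    rw [hPp]
    exact posPart_nonneg P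
  have hfin : (2 * m) • (x * y) = ((m * m) • x + x * (y * y)) - P := by
    rw [hPdef]
    abel
  rw [hfin]
  exact sub_le_self _ hP0


lemma approx (hsmul : ∀ (r : ℝ) (x : A), 0 ≤ r → 0 ≤ x → 0 ≤ r • x)
    (hmul : MulPos A) (hf : FCond A) (hsp : Semiprime A)
    {g : A} (hg : 0 ≤ g) (n : ℕ) (hn : n ≠ 0) :
    ∃ z : A, 0 ≤ z ∧ |g - z - z * g| ≤ ((n : ℝ))⁻¹ • (g + g * g + g * g * g) := by
  have hν0 : (0:ℝ) < (n:ℝ) := by exact_mod_cast Nat.pos_of_ne_zero hn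
  have hνne : ((n:ℝ)) ≠ 0 := ne_of_gt hν0
  have hνinv : (0:ℝ) ≤ ((n:ℝ))⁻¹ := inv_nonneg.2 hν0.le
  have hgg0 : 0 ≤ g * g := sq_nonneg' hmul hf g
  set h : A := g - ((n:ℝ))⁻¹ • (g * g) with hhdef
  set β : A := h⁺ with hβdef
  have hβ0 : 0 ≤ β := posPart_nonneg h
  have hβle : β ≤ g := by
    rw [hβdef, posPart_def]
    exact sup_le (by rw [hhdef]; exact sub_le_self g (hsmul _ _ hνinv hgg0)) hg
  have hgβ0 : 0 ≤ g - β := sub_nonneg.2 hβle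
  have hgβ : g - β ≤ ((n:ℝ))⁻¹ • (g * g) := by
    have h1 : h ≤ β := le_posPart h
    calc g - β ≤ g - h := sub_le_sub_left h1 g
      _ = ((n:ℝ))⁻¹ • (g * g) := by rw [hhdef, sub_sub_cancel]
  have hβh : β * h⁻ = 0 := disj_mul_eq_zero hmul hf (posPart_inf_negPart_eq_zero h)
  have hβeq : β = h + h⁻ := eq_add_of_sub_eq (posPart_sub_negPart h)
  have hβ2 : β * β = β * g - ((n:ℝ))⁻¹ • (β * (g * g)) := by
    calc β * β = β * (h + h⁻) := by rw [← hβeq]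
      _ = β * h + β * h⁻ := mul_add _ _ _
      _ = β * h := by rw [hβh, add_zero]
      _ = β * g - β * (((n:ℝ))⁻¹ • (g * g)) := by rw [hhdef, mul_sub]
      _ = β * g - ((n:ℝ))⁻¹ • (β * (g * g)) := by rw [mul_smul_inv n hn]
  -- real version of sq_key
  have key8 : ∀ (u v : A), 0 ≤ u → 0 ≤ v →
      (2 * (n:ℝ)) • (u * v) ≤ ((n:ℝ) * (n:ℝ)) • u + u * (v * v) := by
    intro u v hu hv
    have k1 := sq_key hmul hf hsp n hu hv
    rwa [← Nat.cast_smul_eq_nsmul ℝ (2*n), ← Nat.cast_smul_eq_nsmul ℝ (n*n),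
      Nat.cast_mul, Nat.cast_mul, Nat.cast_ofNat] at k1
  have hββ : β * β ≤ (n:ℝ) • β := by
    have k2 := smul_le_smul_elem hsmul hνinv (key8 β g hβ0 hg)
    rw [smul_add, smul_smul, smul_smul] at k2
    have s1 : ((n:ℝ))⁻¹ * (2 * (n:ℝ)) = 2 := by field_simp
    have s2 : ((n:ℝ))⁻¹ * ((n:ℝ) * (n:ℝ)) = (n:ℝ) := by field_simp
    rw [s1, s2] at k2
    have e8 : β * β + β * g = (2:ℝ) • (β * g) - ((n:ℝ))⁻¹ • (β * (g * g)) := by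
      rw [hβ2, two_smul]
      abel
    have h9 : β * β + β * g ≤ (n:ℝ) • β := by
      rw [e8]
      exact sub_le_iff_le_add.2 k2
    exact (le_add_of_nonneg_right (hmul _ _ hβ0 hg)).trans h9
  -- the sequence D
  set D : ℕ → A := fun k => Nat.rec β (fun _ d => (n:ℝ) • d - d * β) k with hDdef
  have hD0 : D 0 = β := rfl
  have hDs : ∀ k, D (k+1) = (n:ℝ) • D k - D k * β := fun k => rfl
  have hDfacts : ∀ k, 0 ≤ D k ∧ D k * β ≤ (n:ℝ) • D k ∧ D k ≤ ((n:ℝ)^k) • β := by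
    intro k
    induction k with
    | zero =>
      refine ⟨hβ0, by rw [hD0]; exact hββ, ?_⟩
      rw [hD0, pow_zero, one_smul]
    | succ k ih =>
      obtain ⟨h1, h2, h3⟩ := ih
      have hD1 : 0 ≤ D (k+1) := by rw [hDs k]; exact sub_nonneg.2 h2
      have hDβ : 0 ≤ D k * β := hmul _ _ h1 hβ0
      refine ⟨hD1, ?_, ?_⟩
      · -- D(k+1)*β ≤ ν • D(k+1)
        have k3 := key8 (D k) β h1 hβ0
        rw [hDs k, sub_mul, smul_mul_nat, smul_sub, smul_smul]
        rw [sub_le_sub_iff]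
        have e9 : (n:ℝ) • (D k * β) + (n:ℝ) • (D k * β) = (2 * (n:ℝ)) • (D k * β) := by
          rw [two_mul, add_smul]
        calc (n:ℝ) • (D k * β) + (n:ℝ) • (D k * β) = (2 * (n:ℝ)) • (D k * β) := e9
          _ ≤ ((n:ℝ) * (n:ℝ)) • D k + D k * (β * β) := k3
          _ = ((n:ℝ) * (n:ℝ)) • D k + D k * β * β := by rw [mul_assoc]
      · rw [hDs k]
        calc (n:ℝ) • D k - D k * β ≤ (n:ℝ) • D k := sub_le_self _ hDβ
          _ ≤ (n:ℝ) • (((n:ℝ)^k) • β) := smul_le_smul_elem hsmul hν0.le h3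
          _ = ((n:ℝ)^(k+1)) • β := by rw [smul_smul, ← pow_succ']
  -- scalars
  set M : ℕ := n + 1 with hMdef
  have hM0 : (0:ℝ) < (M:ℝ) := by exact_mod_cast Nat.succ_pos n
  have hMne : ((M:ℝ)) ≠ 0 := ne_of_gt hM0
  have hMr : (M:ℝ) = (n:ℝ) + 1 := by rw [hMdef]; push_cast; ring
  set c : ℕ → ℝ := fun k => (((M^(k+1) : ℕ) : ℝ))⁻¹ with hcdef
  have hcr : ∀ k, c k = (((M:ℝ))^(k+1))⁻¹ := by
    intro k; rw [hcdef]; push_cast; ring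
  have hc0 : ∀ k, 0 ≤ c k := by
    intro k; rw [hcr k]; positivity
  have hMpowne : ∀ k, M^(k+1) ≠ 0 := fun k => pow_ne_zero _ (by omega)
  set rr : ℝ := (n:ℝ) / (M:ℝ) with hrrdef
  have hrr0 : 0 ≤ rr := by rw [hrrdef]; positivity
  have hrr1 : rr < 1 := by
    rw [hrrdef, div_lt_one hM0, hMr]
    linarith
  have hcν : ∀ K, c K * (n:ℝ)^(K+1) = rr^(K+1) := by
    intro K
    rw [hcr K, hrrdef, div_pow]
    field_simp
  -- the sequence x
  set x : ℕ → A := fun K => Nat.rec ((c 0) • β) (fun K xK => xK + c (K+1) • D (K+1)) K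
    with hxdef
  have hx0 : x 0 = c 0 • β := rfl
  have hxs : ∀ K, x (K+1) = x K + c (K+1) • D (K+1) := fun K => rfl
  have hxnn : ∀ K, 0 ≤ x K := by
    intro K
    induction K with
    | zero => exact hsmul _ _ (hc0 0) hβ0
    | succ K ih =>
      rw [hxs K]
      exact add_nonneg ih (hsmul _ _ (hc0 (K+1)) (hDfacts (K+1)).1)
  have hxβ : ∀ K, x K ≤ (1 - rr^(K+1)) • β := by
    intro K
    induction K with
    | zero =>
      rw [hx0]
      apply le_of_eq
      congr 1
      rw [hcr 0, hrrdef, pow_one, pow_one]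
      rw [hMr]
      field_simp
      ring
    | succ K ih =>
      rw [hxs K]
      have b1 : c (K+1) • D (K+1) ≤ (c (K+1) * (n:ℝ)^(K+1)) • β := by
        rw [← smul_smul]
        exact smul_le_smul_elem hsmul (hc0 (K+1)) (hDfacts (K+1)).2.2
      calc x K + c (K+1) • D (K+1) ≤ (1 - rr^(K+1)) • β + (c (K+1) * (n:ℝ)^(K+1)) • β :=
            add_le_add ih b1
        _ = ((1 - rr^(K+1)) + c (K+1) * (n:ℝ)^(K+1)) • β := (add_smul _ _ _).symm
        _ = (1 - rr^(K+2)) • β := by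
            congr 1
            rw [hcr (K+1), hrrdef, div_pow, div_pow, hMr]
            have hpow : ((n:ℝ)+1)^(K+1+1) ≠ 0 := by positivity
            field_simp
            try ring
  have hxleβ : ∀ K, x K ≤ β := by
    intro K
    refine (hxβ K).trans ?_
    have : (1 - rr^(K+1)) ≤ 1 := by
      have : 0 ≤ rr^(K+1) := pow_nonneg hrr0 _
      linarith
    calc (1 - rr^(K+1)) • β ≤ (1:ℝ) • β := smul_le_smul_scalar hsmul this hβ0
      _ = β := one_smul _ _
  -- defect identity
  have hck : ∀ k, c k = (((M^(k+1) : ℕ) : ℝ))⁻¹ := fun _ => rfl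
  have hdft : ∀ K, β - x K - x K * β = c K • D (K+1) := by
    intro K
    induction K with
    | zero =>
      have e3 : (c 0 • β) * β = c 0 • (β * β) := by
        rw [hck 0]; exact smul_mul_inv _ (hMpowne 0) _ _
      have e1 : (1 - c 0) • β = β - c 0 • β := by rw [sub_smul, one_smul]
      have e2 : (1 - c 0) = c 0 * (n:ℝ) := by
        rw [hcr 0, pow_one, hMr]
        field_simp
        ring
      have e5 : c 0 • D (0+1) = (c 0 * (n:ℝ)) • β - c 0 • (β * β) := by
        rw [hDs 0, hD0, smul_sub, smul_smul]
      calc β - x 0 - x 0 * β = β - c 0 • β - (c 0 • β) * β := by rw [hx0]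
        _ = (1 - c 0) • β - c 0 • (β * β) := by rw [e1, e3]
        _ = (c 0 * (n:ℝ)) • β - c 0 • (β * β) := by rw [e2]
        _ = c 0 • D (0+1) := e5.symm
    | succ K ih =>
      have e1 : β - x (K+1) - x (K+1) * β
          = (β - x K - x K * β) - c (K+1) • D (K+1) - (c (K+1) • D (K+1)) * β := by
        rw [hxs K, add_mul]
        abel
      have e3 : (c (K+1) • D (K+1)) * β = c (K+1) • (D (K+1) * β) := by
        rw [hck (K+1)]; exact smul_mul_inv _ (hMpowne (K+1)) _ _
      have hs : c K - c (K+1) = c (K+1) * (n:ℝ) := by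
        have hp1 : ((M:ℝ))^(K+1+1) = ((M:ℝ))^(K+1) * (M:ℝ) := pow_succ _ _
        rw [hcr K, hcr (K+1), hp1, hMr]
        have hpow : ((n:ℝ)+1)^(K+1) ≠ 0 := by positivity
        field_simp
        try ring
      have e2 : c K • D (K+1) - c (K+1) • D (K+1) = (c (K+1) * (n:ℝ)) • D (K+1) := by
        rw [← sub_smul, hs]
      have e5 : c (K+1) • D (K+1+1) = (c (K+1) * (n:ℝ)) • D (K+1) - c (K+1) • (D (K+1) * β) := by
        rw [hDs (K+1), smul_sub, smul_smul]
      calc β - x (K+1) - x (K+1) * β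
          = (β - x K - x K * β) - c (K+1) • D (K+1) - (c (K+1) • D (K+1)) * β := e1
        _ = c K • D (K+1) - c (K+1) • D (K+1) - c (K+1) • (D (K+1) * β) := by rw [ih, e3]
        _ = (c (K+1) * (n:ℝ)) • D (K+1) - c (K+1) • (D (K+1) * β) := by rw [e2]
        _ = c (K+1) • D (K+1+1) := e5.symm
  -- choose K
  obtain ⟨K0, hK0⟩ := exists_pow_lt_of_lt_one (show (0:ℝ) < ((n:ℝ))⁻¹ by positivity) hrr1
  have hKb : rr^(K0+1) ≤ ((n:ℝ))⁻¹ :=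
    (pow_le_pow_of_le_one hrr0 hrr1.le (Nat.le_succ K0)).trans hK0.le
  refine ⟨x K0, hxnn K0, ?_⟩
  -- defect bound
  have hdnn : 0 ≤ c K0 • D (K0+1) := hsmul _ _ (hc0 K0) (hDfacts (K0+1)).1
  have hdb : c K0 • D (K0+1) ≤ ((n:ℝ))⁻¹ • g := by
    have b1 : c K0 • D (K0+1) ≤ (c K0 * (n:ℝ)^(K0+1)) • β := by
      rw [← smul_smul]
      exact smul_le_smul_elem hsmul (hc0 K0) (hDfacts (K0+1)).2.2
    calc c K0 • D (K0+1) ≤ (c K0 * (n:ℝ)^(K0+1)) • β := b1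
      _ = (rr^(K0+1)) • β := by rw [hcν K0]
      _ ≤ ((n:ℝ))⁻¹ • β := smul_le_smul_scalar hsmul hKb hβ0
      _ ≤ ((n:ℝ))⁻¹ • g := smul_le_smul_elem hsmul hνinv hβle
  -- assemble
  set z : A := x K0 with hzdef
  have hz0 : 0 ≤ z := hxnn K0
  have hzβ : z ≤ β := hxleβ K0
  have hzg : z ≤ g := hzβ.trans hβle
  have hδdec : g - z - z * g = (g - β) + (β - z - z * β) + (z * β - z * g) := by abel
  have t1 : |g - β| ≤ ((n:ℝ))⁻¹ • (g * g) := by rw [abs_of_nonneg hgβ0]; exact hgβ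
  have t2 : |β - z - z * β| ≤ ((n:ℝ))⁻¹ • g := by
    rw [hdft K0]
    rw [abs_of_nonneg hdnn]
    exact hdb
  have t3 : |z * β - z * g| ≤ ((n:ℝ))⁻¹ • (g * g * g) := by
    have e4 : z * β - z * g = -(z * (g - β)) := by rw [mul_sub, neg_sub]
    have h5 : 0 ≤ z * (g - β) := hmul _ _ hz0 hgβ0
    rw [e4, abs_neg, abs_of_nonneg h5]
    calc z * (g - β) = (g - β) * z := mul_comm _ _
      _ ≤ (g - β) * g := mul_le_mul_left' hmul _ hgβ0 hzg
      _ ≤ (((n:ℝ))⁻¹ • (g * g)) * g := mul_le_mul_right' hmul g hg hgβ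
      _ = ((n:ℝ))⁻¹ • (g * g * g) := smul_mul_inv n hn _ _
  calc |g - z - z * g| ≤ |(g - β) + (β - z - z * β)| + |z * β - z * g| := by
        rw [hδdec]; exact abs_add_le _ _
    _ ≤ (|g - β| + |β - z - z * β|) + |z * β - z * g| :=
        add_le_add_left (abs_add_le _ _) _
    _ ≤ (((n:ℝ))⁻¹ • (g * g) + ((n:ℝ))⁻¹ • g) + ((n:ℝ))⁻¹ • (g * g * g) :=
        add_le_add (add_le_add t1 t2) t3
    _ = ((n:ℝ))⁻¹ • (g + g * g + g * g * g) := by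
        rw [← smul_add, ← smul_add]
        congr 1
        abel


lemma exists_res (hsmul : ∀ (r : ℝ) (x : A), 0 ≤ r → 0 ≤ x → 0 ≤ r • x)
    (hmul : MulPos A) (hf : FCond A) (hsp : Semiprime A)
    (harch : ArchOrder A) (hru : RUComplete A)
    {g : A} (hg : 0 ≤ g) : ∃ s : A, s + s * g = g := by
  set ρ : A := g + g * g + g * g * g with hρdef
  have hρ0 : 0 ≤ ρ := add_nonneg (add_nonneg hg (sq_nonneg' hmul hf g))
    (hmul _ _ (sq_nonneg' hmul hf g) hg)
  have hap : ∀ j : ℕ, ∃ z, 0 ≤ z ∧ |g - z - z * g| ≤ (((j+1 : ℕ) : ℝ))⁻¹ • ρ := fun j =>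
    approx hsmul hmul hf hsp hg (j+1) (Nat.succ_ne_zero j)
  choose z hz0 hzδ using hap
  have hpair : ∀ i k : ℕ, |z i - z k| ≤ ((((i+1:ℕ):ℝ))⁻¹ + (((k+1:ℕ):ℝ))⁻¹) • ρ := by
    intro i k
    have hw : (z i - z k) + (z i - z k) * g
        = (g - z k - z k * g) - (g - z i - z i * g) := by
      rw [sub_mul]; abel
    have h2 : |z i - z k| + |z i - z k| * g = |(z i - z k) + (z i - z k) * g| :=
      (absAddMul hmul hf hg _).symm
    have h1 : |z i - z k| ≤ |z i - z k| + |z i - z k| * g :=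
      le_add_of_nonneg_right (hmul _ _ (abs_nonneg _) hg)
    rw [h2, hw] at h1
    have h3 : |(g - z k - z k * g) - (g - z i - z i * g)|
        ≤ |g - z k - z k * g| + |g - z i - z i * g| := abs_sub_le' _ _
    have h4 := h1.trans (h3.trans (add_le_add (hzδ k) (hzδ i)))
    rw [← add_smul, add_comm ((((k+1:ℕ):ℝ))⁻¹)] at h4
    exact h4
  have hcauchy : ∀ ε : ℝ, 0 < ε → ∃ N : ℕ, ∀ m ≥ N, ∀ k ≥ N, |z m - z k| ≤ ε • ρ := by
    intro ε hε
    obtain ⟨N, hN⟩ := exists_nat_gt (2/ε)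
    refine ⟨N, fun m hm k hk => ?_⟩
    have key : ∀ q : ℕ, N ≤ q → (((q+1:ℕ):ℝ))⁻¹ ≤ ε/2 := by
      intro q hq
      have h0 : (0:ℝ) < 2/ε := by positivity
      have h1 : (2/ε) < ((q+1:ℕ):ℝ) := by
        have hNq : (N:ℝ) ≤ (q:ℝ) := by exact_mod_cast hq
        push_cast
        linarith
      have h2 : (((q+1:ℕ):ℝ))⁻¹ < (2/ε)⁻¹ := by
        exact inv_strictAnti₀ h0 h1
      rw [inv_div] at h2
      exact h2.le
    refine (hpair m k).trans (smul_le_smul_scalar hsmul ?_ hρ0)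
    have := add_le_add (key m hm) (key k hk)
    linarith
  obtain ⟨s, hslim⟩ := hru z ρ hρ0 hcauchy
  have hΔb : ∀ k : ℕ, |g - s - s * g| ≤ (((k+1:ℕ):ℝ))⁻¹ • (ρ + ρ + ρ * g) := by
    intro k
    have hεk : (0:ℝ) < (((k+1:ℕ):ℝ))⁻¹ := by positivity
    obtain ⟨N, hN⟩ := hslim _ hεk
    have hjN : N ≤ max N k := le_max_left _ _
    have hjk : k ≤ max N k := le_max_right _ _
    set j := max N k with hj
    have h1 : |z j - s| ≤ (((k+1:ℕ):ℝ))⁻¹ • ρ := hN j hjN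
    have h0 : |g - z j - z j * g| ≤ (((k+1:ℕ):ℝ))⁻¹ • ρ := by
      refine (hzδ j).trans (smul_le_smul_scalar hsmul ?_ hρ0)
      have hk1 : (0:ℝ) < ((k+1:ℕ):ℝ) := by positivity
      have hjk' : ((k+1:ℕ):ℝ) ≤ ((j+1:ℕ):ℝ) := by
        have : (k:ℝ) ≤ (j:ℝ) := by exact_mod_cast hjk
        push_cast
        linarith
      exact inv_anti₀ hk1 hjk'
    have hdec : g - s - s * g = (g - z j - z j * g) + ((z j - s) + (z j - s) * g) := by
      rw [sub_mul]; abel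
    have h2 : |(z j - s) + (z j - s) * g| = |z j - s| + |z j - s| * g := absAddMul hmul hf hg _
    have h3 : |z j - s| * g ≤ ((((k+1:ℕ):ℝ))⁻¹ • ρ) * g := mul_le_mul_right' hmul g hg h1
    have h4 : ((((k+1:ℕ):ℝ))⁻¹ • ρ) * g = (((k+1:ℕ):ℝ))⁻¹ • (ρ * g) :=
      smul_mul_inv (k+1) (Nat.succ_ne_zero k) _ _
    calc |g - s - s * g| ≤ |g - z j - z j * g| + |(z j - s) + (z j - s) * g| := by
          rw [hdec]; exact abs_add_le _ _
      _ = |g - z j - z j * g| + (|z j - s| + |z j - s| * g) := by rw [h2]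
      _ ≤ (((k+1:ℕ):ℝ))⁻¹ • ρ + ((((k+1:ℕ):ℝ))⁻¹ • ρ + (((k+1:ℕ):ℝ))⁻¹ • (ρ * g)) := by
          refine add_le_add h0 (add_le_add h1 ?_)
          rw [← h4]
          exact h3
      _ = (((k+1:ℕ):ℝ))⁻¹ • (ρ + ρ + ρ * g) := by rw [hρdef]; simp only [smul_add]; abel
  have harch' : ∀ m : ℕ, m • |g - s - s * g| ≤ (ρ + ρ + ρ * g) := by
    intro m
    have h5 : m • |g - s - s * g| ≤ (m+1) • |g - s - s * g| := by
      rw [succ_nsmul]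
      exact le_add_of_nonneg_right (abs_nonneg _)
    have h6 : (m+1) • |g - s - s * g| = (((m+1:ℕ):ℝ)) • |g - s - s * g| :=
      (Nat.cast_smul_eq_nsmul ℝ _ _).symm
    have h7 : (((m+1:ℕ):ℝ)) • |g - s - s * g|
        ≤ (((m+1:ℕ):ℝ)) • ((((m+1:ℕ):ℝ))⁻¹ • (ρ + ρ + ρ * g)) :=
      smul_le_smul_elem hsmul (by positivity) (hΔb m)
    have h8 : (((m+1:ℕ):ℝ)) • ((((m+1:ℕ):ℝ))⁻¹ • (ρ + ρ + ρ * g)) = ρ + ρ + ρ * g := by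
      rw [smul_smul, mul_inv_cancel₀ (by positivity), one_smul]
    calc m • |g - s - s * g| ≤ (m+1) • |g - s - s * g| := h5
      _ = (((m+1:ℕ):ℝ)) • |g - s - s * g| := h6
      _ ≤ (((m+1:ℕ):ℝ)) • ((((m+1:ℕ):ℝ))⁻¹ • (ρ + ρ + ρ * g)) := h7
      _ = ρ + ρ + ρ * g := h8
  have h9 : |g - s - s * g| ≤ 0 := harch _ _ harch'
  have habs0 : |g - s - s * g| = 0 := le_antisymm h9 (abs_nonneg _)
  have hle : g - s - s * g ≤ 0 := (le_abs_self _).trans (le_of_eq habs0)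
  have hge : 0 ≤ g - s - s * g :=
    neg_nonpos.1 ((neg_le_abs (g - s - s * g)).trans (le_of_eq habs0))
  have h10 : g - s - s * g = 0 := le_antisymm hle hge
  refine ⟨s, ?_⟩
  have h12 : g - (s + s * g) = 0 := by rw [← h10]; abel
  exact (sub_eq_zero.1 h12).symm

end SMul
end OIAux

/-- In a relatively uniformly complete Archimedean semiprime f-algebra, any subalgebra
containing all bounded elements is an order ideal. -/
theorem intermediate_algebra_orderIdeal_of_ruComplete {A : Type*} [NonUnitalCommRing A]
    [Lattice A] [CovariantClass A A (· + ·) (· ≤ ·)] [Module ℝ A]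
    (hsmul : ∀ (r : ℝ) (x : A), 0 ≤ r → 0 ≤ x → 0 ≤ r • x)
    (hmul : MulPos A) (hf : FCond A) (hsp : Semiprime A) (harch : ArchOrder A)
    (hru : RUComplete A)
    (B : NonUnitalSubalgebra ℝ A) (hB : ∀ a : A, IsBoundedElem A a → a ∈ B) :
    ∀ (a b : A), b ∈ B → |a| ≤ |b| → a ∈ B := by
  intro a b hbB hab
  set g : A := b * b with hgdef
  have hg : 0 ≤ g := by rw [hgdef]; exact OIAux.sq_nonneg' hmul hf b
  obtain ⟨s, hs⟩ := OIAux.exists_res hsmul hmul hf hsp harch hru hg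
  have hgs : g - s - s * g = 0 := by rw [sub_sub, hs, sub_self]
  have hs0 : 0 ≤ s := by
    have hd : -s ≤ -((-s) * g) := by
      rw [neg_mul, neg_neg]
      have e : s * g = g - s := by rw [eq_sub_iff_add_eq, add_comm]; exact hs
      rw [e]
      calc (-s) = 0 - s := (zero_sub s).symm
        _ ≤ g - s := sub_le_sub_right hg s
    exact neg_nonpos.1 (OIAux.le_zero_of_selfneg hmul hf hg hd)
  have hss : s * s ≤ s := OIAux.sq_le_self_A hmul hf hs0 hg (le_of_eq hs)
  have hsB : s ∈ B := hB s ⟨1, one_pos, by rw [one_smul, abs_of_nonneg hs0]; exact hss⟩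
  -- the element u
  set u : A := a - a * s with hudef
  have hu_id : u + u * g = a := by
    rw [hudef]
    have e : (a - a * s) + (a - a * s) * g = a + a * (g - s - s * g) := by
      simp only [sub_mul, mul_sub, mul_assoc]
      abel
    rw [e, hgs, mul_zero, add_zero]
  have habs_u : |u| + |u| * g = |a| := by
    rw [← OIAux.absAddMul hmul hf hg u, hu_id]
  have hbb : |b| * |b| = g := by rw [hgdef]; exact OIAux.sq_abs' hmul hf b
  have hub : |u| + |u| * (|b| * |b|) ≤ |b| := by
    rw [hbb, habs_u]
    exact hab
  have huu : |u| * |u| ≤ |u| := OIAux.sq_le_self_B hmul hf (abs_nonneg u) (abs_nonneg b) hub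
  have huB : u ∈ B := hB u ⟨1, one_pos, by
    rw [one_smul]
    calc u * u = |u| * |u| := (OIAux.sq_abs' hmul hf u).symm
      _ ≤ |u| := huu⟩
  -- the element w
  set w : A := a * b - a * b * s with hwdef
  have hw_id : w + w * g = a * b := by
    rw [hwdef]
    have e : (a * b - a * b * s) + (a * b - a * b * s) * g = a * b + a * b * (g - s - s * g) := by
      simp only [sub_mul, mul_sub, mul_assoc]
      abel
    rw [e, hgs, mul_zero, add_zero]
  have habs_w : |w| + |w| * g = |a * b| := by
    rw [← OIAux.absAddMul hmul hf hg w, hw_id]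
  have hwb : |w| + |w| * g ≤ g := by
    rw [habs_w]
    calc |a * b| ≤ |a| * |b| := OIAux.abs_mul_le' hmul a b
      _ ≤ |b| * |b| := by
          rw [mul_comm |a| |b|]
          exact OIAux.mul_le_mul_left' hmul (|b|) (abs_nonneg b) hab
      _ = g := hbb
  have hww : |w| * |w| ≤ |w| := OIAux.sq_le_self_A hmul hf (abs_nonneg w) hg hwb
  have hwB : w ∈ B := hB w ⟨1, one_pos, by
    rw [one_smul]
    calc w * w = |w| * |w| := (OIAux.sq_abs' hmul hf w).symm
      _ ≤ |w| := hww⟩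
  -- assembling a = u + b * w
  have hz_id : (u + b * w - a) + (u + b * w - a) * g = 0 := by
    have e1 : (u + b * w - a) + (u + b * w - a) * g
        = (u + u * g) + b * (w + w * g) - (a + a * g) := by
      simp only [add_mul, sub_mul, mul_add, mul_assoc]
      abel
    rw [e1, hu_id, hw_id]
    have e2 : b * (a * b) = a * g := by rw [hgdef, mul_left_comm]
    rw [e2]
    abel
  have hz1 : u + b * w - a ≤ 0 := by
    apply OIAux.le_zero_of_selfneg hmul hf hg
    exact le_of_eq (eq_neg_of_add_eq_zero_left hz_id)
  have hz2 : -(u + b * w - a) ≤ 0 := by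
    apply OIAux.le_zero_of_selfneg hmul hf hg
    have h3 : (u + b * w - a) * g = -(u + b * w - a) := eq_neg_of_add_eq_zero_right hz_id
    have h4 : -((-(u + b * w - a)) * g) = (u + b * w - a) * g := by rw [neg_mul, neg_neg]
    rw [h4, h3]
  have hz0 : u + b * w - a = 0 := le_antisymm hz1 (neg_nonpos.1 hz2)
  have ha : a = u + b * w := (sub_eq_zero.1 hz0).symm
  rw [ha]
  exact add_mem huB (mul_mem hbB hwB)
end
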